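/- Let B be a K-acceptor and L = L(B). For all timed words u, v: if B reaches the same control state on reading u and v from the initial configuration (u ≈^B v), then u ≈^{L,K} v. -/

import Mathlib

open scoped NNReal Classical

namespace IRTA

/-- A timestamp is a finite sequence of non-negative reals. -/
abbrev Timestamp : Type := List ℝ≥0

/-- A timed word is a finite sequence of (delay, letter) pairs. -/
abbrev TimedWord (A : Type) : Type := List (ℝ≥0 × A)

/-- Fractional part of a non-negative real. -/
noncomputable def fracPart (x : ℝ≥0) : ℝ≥0 := x - (⌊x⌋₊ : ℝ≥0)

/-- `x` is a natural-number value. -/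
def IsNatVal (x : ℝ≥0) : Prop := ∃ m : ℕ, x = (m : ℝ≥0)

/-- Region equivalence `≡^K`. -/
def RegEq (K : ℕ) (x y : ℝ≥0) : Prop :=
  (⌊x⌋₊ = ⌊y⌋₊ ∧ (fracPart x = 0 ↔ fracPart y = 0)) ∨ ((K : ℝ≥0) < x ∧ (K : ℝ≥0) < y)

/-- One step of the (greedy) clock evolution: reset whenever the value is an
integer between `0` and `K`. -/
noncomputable def resetStep (K : ℕ) (v : ℝ≥0) : ℝ≥0 :=
  if ∃ m : ℕ, m ≤ K ∧ v = (m : ℝ≥0) then 0 else v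

/-- Auxiliary function computing `c^K` with accumulator `v`. -/
noncomputable def cKAux (K : ℕ) : ℝ≥0 → Timestamp → ℝ≥0
  | v, [] => v
  | v, t :: d => cKAux K (resetStep K (v + t)) d

/-- `c^K(d)`: the sum of the delays after the last integral position of `d`. -/
noncomputable def cK (K : ℕ) (d : Timestamp) : ℝ≥0 := cKAux K 0 d

/-- `c^K` of a timed word is `c^K` of its timestamp. -/
noncomputable def cKW {A : Type} (K : ℕ) (w : TimedWord A) : ℝ≥0 :=
  cK K (w.map Prod.fst)

/-- `c^K_⊤` : `c^K` truncated at `K`. -/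
noncomputable def cKTop {A : Type} (K : ℕ) (w : TimedWord A) : WithTop ℝ≥0 :=
  if cKW K w ≤ (K : ℝ≥0) then ((cKW K w : ℝ≥0) : WithTop ℝ≥0) else ⊤

/-! ### Clock constraints and one-clock timed automata -/

/-- Clock constraints `φ ::= x < m | m < x | x = m | φ ∧ φ`. -/
inductive CC : Type where
  | lt : ℕ → CC
  | gt : ℕ → CC
  | eq : ℕ → CC
  | and : CC → CC → CC

/-- Satisfaction of a clock constraint by a clock value. -/
def CC.sat : CC → ℝ≥0 → Prop
  | .lt m, x => x < (m : ℝ≥0)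
  | .gt m, x => (m : ℝ≥0) < x
  | .eq m, x => x = (m : ℝ≥0)
  | .and φ ψ, x => φ.sat x ∧ ψ.sat x

/-- The largest constant appearing in a clock constraint. -/
def CC.maxConst : CC → ℕ
  | .lt m => m
  | .gt m => m
  | .eq m => m
  | .and φ ψ => max φ.maxConst ψ.maxConst

/-- A transition of a one-clock timed automaton; `reset = true` means the
clock is reset (the `r = 0` case). -/
structure TTrans (Q A : Type) where
  src : Q
  dst : Q
  lab : A
  guard : CC
  reset : Bool

/-- A one-clock timed automaton. -/
structure TA (A : Type) where
  Q : Type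
  init : Q
  final : Set Q
  trans : Set (TTrans Q A)

/-- The automaton has finitely many states and transitions. -/
def TA.IsFinite {A : Type} (M : TA A) : Prop := Finite M.Q ∧ M.trans.Finite

/-- Runs of a one-clock timed automaton between configurations. -/
inductive Steps {A : Type} (M : TA A) : M.Q × ℝ≥0 → TimedWord A → M.Q × ℝ≥0 → Prop
  | nil (c : M.Q × ℝ≥0) : Steps M c [] c
  | cons {q : M.Q} {ν t : ℝ≥0} {a : A} {w : TimedWord A} {c : M.Q × ℝ≥0}
      (θ : TTrans M.Q A) (hθ : θ ∈ M.trans) (hsrc : θ.src = q) (hlab : θ.lab = a)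
      (hg : θ.guard.sat (ν + t))
      (hrest : Steps M (θ.dst, if θ.reset then 0 else ν + t) w c) :
      Steps M (q, ν) ((t, a) :: w) c

/-- The language of `M` from a given configuration. -/
def TA.LangFrom {A : Type} (M : TA A) (c : M.Q × ℝ≥0) : Set (TimedWord A) :=
  {w | ∃ q' : M.Q, ∃ ν' : ℝ≥0, Steps M c w (q', ν') ∧ q' ∈ M.final}

/-- The language of `M` (from the initial configuration). -/
def TA.Lang {A : Type} (M : TA A) : Set (TimedWord A) := M.LangFrom (M.init, 0)

/-- Determinism: distinct transitions with the same source and letter have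
disjoint guards. -/
def TA.Deterministic {A : Type} (M : TA A) : Prop :=
  ∀ θ₁ ∈ M.trans, ∀ θ₂ ∈ M.trans, θ₁ ≠ θ₂ → θ₁.src = θ₂.src → θ₁.lab = θ₂.lab →
    ∀ x : ℝ≥0, ¬ (θ₁.guard.sat x ∧ θ₂.guard.sat x)

/-- Completeness: every timed word admits a run from the initial configuration. -/
def TA.Complete {A : Type} (M : TA A) : Prop :=
  ∀ w : TimedWord A, ∃ c : M.Q × ℝ≥0, Steps M (M.init, 0) w c

/-- A 1-IRTA: every resetting transition has an equality guard. -/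
def TA.IsIRTA {A : Type} (M : TA A) : Prop :=
  ∀ θ ∈ M.trans, θ.reset = true → ∃ m : ℕ, θ.guard = CC.eq m

/-- Guards allowed in a strict 1-IRTA with constant `K`. -/
def StrictGuard (K : ℕ) (φ : CC) : Prop :=
  (∃ m : ℕ, φ = CC.eq m) ∨ (∃ m : ℕ, φ = CC.and (CC.gt m) (CC.lt (m + 1))) ∨ φ = CC.gt K

/-- Strictness with constant `K`: every guard is of one of the allowed forms
and a guard is an equality iff the transition resets. -/
def TA.IsStrict {A : Type} (M : TA A) (K : ℕ) : Prop :=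
  ∀ θ ∈ M.trans, StrictGuard K θ.guard ∧ ((∃ m : ℕ, θ.guard = CC.eq m) ↔ θ.reset = true)

/-- All constants appearing in guards are at most `K`. -/
def TA.MaxConstLE {A : Type} (M : TA A) (K : ℕ) : Prop :=
  ∀ θ ∈ M.trans, θ.guard.maxConst ≤ K

/-- `M` reaches the same control state on reading `u` and `v` from the initial
configuration. -/
def TA.SameState {A : Type} (M : TA A) (u v : TimedWord A) : Prop :=
  ∃ q : M.Q, ∃ ν ν' : ℝ≥0, Steps M (M.init, 0) u (q, ν) ∧ Steps M (M.init, 0) v (q, ν')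

/-- A `K`-acceptor. -/
def IsKAcceptor {A : Type} (M : TA A) (K : ℕ) : Prop :=
  M.IsFinite ∧ M.Complete ∧ M.Deterministic ∧ M.IsIRTA ∧ M.IsStrict K ∧ M.MaxConstLE K ∧
    ∀ u v : TimedWord A, M.SameState u v → RegEq K (cKW K u) (cKW K v)

/-! ### Equivalences on timed words -/

/-- `L`-preservation of a relation on timed words. -/
def LPreserving {A : Type} (L : Set (TimedWord A)) (r : TimedWord A → TimedWord A → Prop) :
    Prop :=
  ∀ u v : TimedWord A, r u v → (u ∈ L ↔ v ∈ L)

/-- `K`-monotonicity of a relation on timed words. -/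
def KMonotonic {A : Type} (K : ℕ) (r : TimedWord A → TimedWord A → Prop) : Prop :=
  ∀ u v : TimedWord A, r u v →
    RegEq K (cKW K u) (cKW K v) ∧
      ∀ (a : A) (t t' : ℝ≥0), RegEq K (cKW K u + t) (cKW K v + t') →
        r (u ++ [(t, a)]) (v ++ [(t', a)])

/-- Finite index: there are finitely many classes `{v | r u v}`. -/
def FiniteIndex {A : Type} (r : TimedWord A → TimedWord A → Prop) : Prop :=
  Set.Finite (Set.range fun u : TimedWord A => {v : TimedWord A | r u v})

/-! ### The rescaling maps -/

/-- The bijection `f_{λ→λ'}` of the open unit interval. -/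
noncomputable def fScale (lam lam' t : ℝ≥0) : ℝ≥0 :=
  if t ≤ lam then (lam' / lam) * t else lam' + ((1 - lam') / (1 - lam)) * (t - lam)

/-- The new delay `t'` computed from the current clock values `y, y'` and delay `t`. -/
noncomputable def tauStep (K : ℕ) (y y' t : ℝ≥0) : ℝ≥0 :=
  if (IsNatVal y ∧ IsNatVal y') ∨ ((K : ℝ≥0) < y ∧ (K : ℝ≥0) < y') then t
  else (⌊t⌋₊ : ℝ≥0) + fScale (1 - fracPart y) (1 - fracPart y') (fracPart t)

/-- Auxiliary rescaling map on timestamps, carrying the current clock values. -/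
noncomputable def tauAux (K : ℕ) : ℝ≥0 → ℝ≥0 → Timestamp → Timestamp
  | _, _, [] => []
  | y, y', t :: d =>
      tauStep K y y' t ::
        tauAux K (resetStep K (y + t)) (resetStep K (y' + tauStep K y y' t)) d

/-- The rescaling map `τ_{x→x'}` on timestamps. -/
noncomputable def tau (K : ℕ) (x x' : ℝ≥0) (d : Timestamp) : Timestamp :=
  tauAux K (resetStep K x) (resetStep K x') d

/-- Auxiliary rescaling map on timed words. -/
noncomputable def tauWAux {A : Type} (K : ℕ) : ℝ≥0 → ℝ≥0 → TimedWord A → TimedWord A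
  | _, _, [] => []
  | y, y', (t, a) :: w =>
      (tauStep K y y' t, a) ::
        tauWAux K (resetStep K (y + t)) (resetStep K (y' + tauStep K y y' t)) w

/-- The rescaling map `τ_{x→x'}` on timed words. -/
noncomputable def tauW {A : Type} (K : ℕ) (x x' : ℝ≥0) (w : TimedWord A) : TimedWord A :=
  tauWAux K (resetStep K x) (resetStep K x') w

/-! ### Residuals and the syntactic equivalence -/

/-- The residual language `u^{-1}L`. -/
def residual {A : Type} (L : Set (TimedWord A)) (u : TimedWord A) : Set (TimedWord A) :=
  {w : TimedWord A | u ++ w ∈ L}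

/-- The syntactic equivalence `≈^{L,K}`. -/
def ApproxLK {A : Type} (L : Set (TimedWord A)) (K : ℕ) (u v : TimedWord A) : Prop :=
  RegEq K (cKW K u) (cKW K v) ∧
    (tauW K (cKW K u) (cKW K v)) '' (residual L u) = residual L v

/-! ### The automaton built from a monotonic equivalence -/

/-- The region guard `φ([t])`. -/
noncomputable def phiOf (K : ℕ) (t : ℝ≥0) : CC :=
  if t ≤ (K : ℝ≥0) then
    (if IsNatVal t then CC.eq ⌊t⌋₊ else CC.and (CC.gt ⌊t⌋₊) (CC.lt (⌊t⌋₊ + 1)))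
  else CC.gt K

/-- The automaton `A_≈` built from an equivalence `s` on timed words. -/
noncomputable def Aapprox {A : Type} (L : Set (TimedWord A)) (K : ℕ)
    (s : Setoid (TimedWord A)) : TA A where
  Q := Quotient s
  init := Quotient.mk s ([] : TimedWord A)
  final := {q : Quotient s | ∃ u : TimedWord A, q = Quotient.mk s u ∧ u ∈ L}
  trans := {θ : TTrans (Quotient s) A |
    ∃ (u : TimedWord A) (a : A) (t : ℝ≥0),
      θ.src = Quotient.mk s u ∧ θ.dst = Quotient.mk s (u ++ [(t, a)]) ∧ θ.lab = a ∧
      θ.guard = phiOf K (cKW K u + t) ∧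
      (θ.reset = true ↔ ∃ m : ℕ, m ≤ K ∧ cKW K u + t = (m : ℝ≥0))}

/-! ### Half-integral and small words -/

/-- Every delay has fractional part `0` or `1/2`. -/
def HalfIntegral {A : Type} (w : TimedWord A) : Prop :=
  ∀ p ∈ w, fracPart p.1 = 0 ∨ fracPart p.1 = 1 / 2

/-- Every delay is `< K + 1`. -/
def SmallWord {A : Type} (K : ℕ) (w : TimedWord A) : Prop :=
  ∀ p ∈ w, p.1 < (K : ℝ≥0) + 1

/-- The delays of `Σ_K`: half-integral values `≤ K + 1/2`. -/
def IsSigmaK (K : ℕ) (t : ℝ≥0) : Prop :=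
  (fracPart t = 0 ∨ fracPart t = 1 / 2) ∧ t ≤ (K : ℝ≥0) + 1 / 2

/-- Words over `Σ_K` (small half-integral words). -/
def SigmaWord {A : Type} (K : ℕ) (w : TimedWord A) : Prop :=
  ∀ p ∈ w, IsSigmaK K p.1



/-! ### `K`-acceptors with their region representatives -/

/-- A `K`-acceptor bundled with the half-integral representative of the
unique region of each state. -/
structure KAcc (A : Type) (K : ℕ) where
  M : TA A
  acc : IsKAcceptor M K
  reg : M.Q → ℝ≥0
  regHalf : ∀ q : M.Q, fracPart (reg q) = 0 ∨ fracPart (reg q) = 1 / 2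
  regLe : ∀ q : M.Q, reg q ≤ (K : ℝ≥0) + 1 / 2
  regSpec : ∀ (w : TimedWord A) (q : M.Q) (x : ℝ≥0),
    Steps M (M.init, 0) w (q, x) → RegEq K x (reg q)

/-- The minimization equivalences `∼^i` on the states of a `K`-acceptor. -/
def simEq {A : Type} {K : ℕ} (B : KAcc A K) : ℕ → B.M.Q → B.M.Q → Prop
  | 0, p, q => B.reg p = B.reg q ∧ (p ∈ B.M.final ↔ q ∈ B.M.final)
  | i + 1, p, q => simEq B i p q ∧
      ∀ (t : ℝ≥0) (a : A), IsSigmaK K t →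
        ∀ θ₁ θ₂ : TTrans B.M.Q A, θ₁ ∈ B.M.trans → θ₂ ∈ B.M.trans →
          θ₁.src = p → θ₂.src = q → θ₁.lab = a → θ₂.lab = a →
          θ₁.guard = phiOf K t → θ₂.guard = phiOf K t →
          simEq B i θ₁.dst θ₂.dst

/-- The quotient automaton `B/∼^m`. -/
noncomputable def quotTA {A : Type} {K : ℕ} (B : KAcc A K) (m : ℕ) : TA A where
  Q := Quot (simEq B m)
  init := Quot.mk (simEq B m) B.M.init
  final := {c : Quot (simEq B m) | ∃ q ∈ B.M.final, c = Quot.mk (simEq B m) q}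
  trans := {θ : TTrans (Quot (simEq B m)) A |
    ∃ θ₀ ∈ B.M.trans,
      θ.src = Quot.mk (simEq B m) θ₀.src ∧ θ.dst = Quot.mk (simEq B m) θ₀.dst ∧
      θ.lab = θ₀.lab ∧ θ.guard = θ₀.guard ∧ θ.reset = θ₀.reset}

/-! ### Observation tables -/

/-- An observation table over `Σ_K`. -/
structure ObsTable (A : Type) (K : ℕ) where
  U1 : Set (TimedWord A)
  E : Set (TimedWord A)
  val : TimedWord A → TimedWord A → Bool
  U1fin : U1.Finite
  Efin : E.Finite
  U1sigma : ∀ u ∈ U1, SigmaWord K u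
  Esigma : ∀ e ∈ E, SigmaWord K e
  epsU1 : ([] : TimedWord A) ∈ U1
  prefixClosed : ∀ (u : TimedWord A) (x : ℝ≥0 × A), u ++ [x] ∈ U1 → u ∈ U1
  epsE : ([] : TimedWord A) ∈ E
  suffixClosed : ∀ (x : ℝ≥0 × A) (e : TimedWord A), x :: e ∈ E → e ∈ E

/-- The set `U2` of one-letter `Σ_K`-extensions of `U1`. -/
def obsU2 {A : Type} {K : ℕ} (T : ObsTable A K) : Set (TimedWord A) :=
  {w : TimedWord A | ∃ u ∈ T.U1, ∃ (t : ℝ≥0) (a : A), IsSigmaK K t ∧ w = u ++ [(t, a)]}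

/-- `R(u)`: the row of `u` (restricted to `E`) together with `c^K_⊤(u)`. -/
noncomputable def Rof {A : Type} {K : ℕ} (T : ObsTable A K) (u : TimedWord A) :
    ({e : TimedWord A // e ∈ T.E} → Bool) × WithTop ℝ≥0 :=
  (fun e => T.val u e.1, cKTop K u)

/-- The table is closed. -/
def ObsTable.Closed {A : Type} {K : ℕ} (T : ObsTable A K) : Prop :=
  ∀ w ∈ obsU2 T, ∃ u ∈ T.U1, Rof T w = Rof T u

/-- The table is consistent. -/
def ObsTable.Consistent {A : Type} {K : ℕ} (T : ObsTable A K) : Prop :=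
  ∀ u ∈ T.U1, ∀ w ∈ T.U1, Rof T u = Rof T w →
    ∀ (t : ℝ≥0) (a : A), IsSigmaK K t → Rof T (u ++ [(t, a)]) = Rof T (w ++ [(t, a)])

/-- The automaton `A_𝒯` induced by a (closed and consistent) observation table. -/
noncomputable def ATable {A : Type} {K : ℕ} (T : ObsTable A K) : TA A where
  Q := {f : ({e : TimedWord A // e ∈ T.E} → Bool) × WithTop ℝ≥0 // ∃ u ∈ T.U1, f = Rof T u}
  init := ⟨Rof T [], ⟨[], T.epsU1, rfl⟩⟩
  final := {q | ∃ u ∈ T.U1, q.1 = Rof T u ∧ T.val u [] = true}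
  trans := {θ | ∃ u ∈ T.U1, ∃ (t : ℝ≥0) (a : A), IsSigmaK K t ∧
      θ.src.1 = Rof T u ∧ θ.dst.1 = Rof T (u ++ [(t, a)]) ∧ θ.lab = a ∧
      θ.guard = phiOf K (cKW K u + t) ∧
      (θ.reset = true ↔ ∃ m : ℕ, m ≤ K ∧ cKW K u + t = (m : ℝ≥0))}

/-- A `K`-acceptor is consistent with the observation table `𝒯`. -/
def ConsistentWith {A : Type} {K : ℕ} (M : TA A) (T : ObsTable A K) : Prop :=
  ∀ w : TimedWord A, (w ∈ T.U1 ∨ w ∈ obsU2 T) → ∀ e ∈ T.E,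
    ∀ (q : M.Q) (ν : ℝ≥0), Steps M (M.init, 0) (w ++ e) (q, ν) →
      (q ∈ M.final ↔ T.val w e = true)

/-- Isomorphism of one-clock timed automata. -/
structure TAIso {A : Type} (M N : TA A) where
  toEquiv : M.Q ≃ N.Q
  init_eq : toEquiv M.init = N.init
  final_iff : ∀ q : M.Q, q ∈ M.final ↔ toEquiv q ∈ N.final
  trans_iff : ∀ θ : TTrans M.Q A,
    θ ∈ M.trans ↔
      (⟨toEquiv θ.src, toEquiv θ.dst, θ.lab, θ.guard, θ.reset⟩ : TTrans N.Q A) ∈ N.trans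

/-!
In a strict 1-IRTA with constants at most `K`, a transition resets the clock exactly when the
clock is an integer `≤ K`, so after reading `w` from the initial configuration the clock holds
`c^K(w)`; moreover guards only see the region of the clock. The rescaling `τ_{y→y'}` is built so
that, step by step, the clock values `y + t` and `y' + t'` stay region-equivalent. Hence a run
from `(q, y)` on `w` is mirrored by a run from `(q, y')` on `τ_{y→y'}(w)` through the same states,
and `τ_{y'→y}` undoes `τ_{y→y'}`. By determinism `u⁻¹L` is the language accepted from the
configuration reached on `u`, which gives the claim for `u ≈^B v`.
-/

section Regions

variable {K : ℕ}

lemma natFloor_add_fracPart (x : ℝ≥0) : (⌊x⌋₊ : ℝ≥0) + fracPart x = x :=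
  add_tsub_cancel_of_le (Nat.floor_le zero_le)

lemma fracPart_lt_one (x : ℝ≥0) : fracPart x < 1 := by
  rw [fracPart, tsub_lt_iff_left (Nat.floor_le zero_le)]
  exact_mod_cast Nat.lt_floor_add_one x

lemma natFloor_natCast_add {n : ℕ} {h : ℝ≥0} (hh : h < 1) : ⌊(n : ℝ≥0) + h⌋₊ = n := by
  rw [add_comm, Nat.floor_add_natCast zero_le, Nat.floor_eq_zero.2 hh, zero_add]

lemma fracPart_natCast_add {n : ℕ} {h : ℝ≥0} (hh : h < 1) : fracPart ((n : ℝ≥0) + h) = h := by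
  rw [fracPart, natFloor_natCast_add hh, add_tsub_cancel_left]

lemma eq_natCast_iff (a : ℝ≥0) (m : ℕ) : a = m ↔ ⌊a⌋₊ = m ∧ fracPart a = 0 := by
  constructor
  · rintro rfl
    simpa using fracPart_natCast_add (n := m) one_pos
  · rintro ⟨hfl, hfr⟩
    rw [← natFloor_add_fracPart a, hfl, hfr, add_zero]

lemma isNatVal_iff_fracPart_eq_zero {x : ℝ≥0} : IsNatVal x ↔ fracPart x = 0 :=
  ⟨fun ⟨m, hm⟩ => ((eq_natCast_iff x m).1 hm).2,
    fun h => ⟨⌊x⌋₊, (eq_natCast_iff x _).2 ⟨rfl, h⟩⟩⟩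

lemma RegEq.refl (x : ℝ≥0) : RegEq K x x := Or.inl ⟨rfl, Iff.rfl⟩

lemma RegEq.symm {a b : ℝ≥0} (h : RegEq K a b) : RegEq K b a :=
  h.imp (fun h => ⟨h.1.symm, h.2.symm⟩) And.symm

section

variable {a b : ℝ≥0} (h : RegEq K a b) {m : ℕ} (hm : m ≤ K)
include h hm

lemma RegEq.eq_natCast_iff : a = m ↔ b = m := by
  rcases h with ⟨hfl, hfr⟩ | ⟨ha, hb⟩
  · rw [IRTA.eq_natCast_iff, IRTA.eq_natCast_iff, hfl, hfr]
  · have hmK : (m : ℝ≥0) ≤ K := by exact_mod_cast hm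
    exact iff_of_false (ne_of_gt (hmK.trans_lt ha)) (ne_of_gt (hmK.trans_lt hb))

lemma RegEq.natCast_le_iff : (m : ℝ≥0) ≤ a ↔ (m : ℝ≥0) ≤ b := by
  rcases h with ⟨hfl, -⟩ | ⟨ha, hb⟩
  · rw [← Nat.le_floor_iff zero_le, ← Nat.le_floor_iff zero_le, hfl]
  · have hmK : (m : ℝ≥0) ≤ K := by exact_mod_cast hm
    exact iff_of_true (hmK.trans ha.le) (hmK.trans hb.le)

lemma RegEq.natCast_lt_iff : (m : ℝ≥0) < a ↔ (m : ℝ≥0) < b := by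
  rw [lt_iff_le_and_ne, lt_iff_le_and_ne]
  exact and_congr (h.natCast_le_iff hm)
    (not_congr (eq_comm.trans ((h.eq_natCast_iff hm).trans eq_comm)))

lemma RegEq.lt_natCast_iff : a < m ↔ b < m := by
  rw [← not_le, ← not_le, h.natCast_le_iff hm]

end

end Regions

section Rescaling

variable {lam lam' : ℝ≥0}

lemma fScale_of_le {g : ℝ≥0} (hg : g ≤ lam) : fScale lam lam' g = lam' / lam * g := if_pos hg

lemma fScale_of_lt {g : ℝ≥0} (hg : lam < g) :
    fScale lam lam' g = lam' + (1 - lam') / (1 - lam) * (g - lam) := if_neg hg.not_ge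

lemma fScale_self (hlam : 0 < lam) : fScale lam lam' lam = lam' := by
  rw [fScale_of_le le_rfl, div_mul_cancel₀ lam' hlam.ne']

lemma fScale_one (hlam : lam < 1) (hlam' : lam' ≤ 1) : fScale lam lam' 1 = 1 := by
  rw [fScale_of_lt hlam, div_mul_cancel₀ _ (tsub_pos_of_lt hlam).ne', add_tsub_cancel_of_le hlam']

lemma fScale_strictMono (hlam : 0 < lam) (hlam1 : lam < 1) (hlam' : 0 < lam')
    (hlam1' : lam' < 1) : StrictMono (fScale lam lam') := by
  have hslope : 0 < (1 - lam') / (1 - lam) :=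
    div_pos (tsub_pos_of_lt hlam1') (tsub_pos_of_lt hlam1)
  intro a b hab
  rcases le_or_gt b lam with hb | hb
  · rw [fScale_of_le (hab.le.trans hb), fScale_of_le hb]
    exact mul_lt_mul_of_pos_left hab (div_pos hlam' hlam)
  rw [fScale_of_lt hb]
  rcases le_or_gt a lam with ha | ha
  · calc fScale lam lam' a ≤ fScale lam lam' lam := by
          rw [fScale_of_le ha, fScale_of_le le_rfl]; exact mul_le_mul_right ha _
      _ = lam' := fScale_self hlam
      _ < _ := lt_add_of_pos_right _ (mul_pos hslope (tsub_pos_of_lt hb))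
  · rw [fScale_of_lt ha]
    gcongr
    exact tsub_lt_tsub_right_of_le ha.le hab

lemma fScale_fScale (hlam : 0 < lam) (hlam1 : lam < 1) (hlam' : 0 < lam') (hlam1' : lam' < 1)
    (g : ℝ≥0) : fScale lam' lam (fScale lam lam' g) = g := by
  rcases le_or_gt g lam with hg | hg
  · have hle : fScale lam lam' g ≤ lam' := by
      simpa only [fScale_self hlam] using
        (fScale_strictMono hlam hlam1 hlam' hlam1').monotone hg
    rw [fScale_of_le hle, fScale_of_le hg, ← mul_assoc, div_mul_div_comm, mul_comm lam lam',
      div_self (mul_ne_zero hlam'.ne' hlam.ne'), one_mul]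
  · have hlt : lam' < fScale lam lam' g := by
      simpa only [fScale_self hlam] using fScale_strictMono hlam hlam1 hlam' hlam1' hg
    rw [fScale_of_lt hlt, fScale_of_lt hg, add_tsub_cancel_left, ← mul_assoc, div_mul_div_comm,
      mul_comm (1 - lam) (1 - lam'),
      div_self (mul_ne_zero (tsub_pos_of_lt hlam1').ne' (tsub_pos_of_lt hlam1).ne'), one_mul,
      add_tsub_cancel_of_le hg.le]

lemma fScale_lt_one (hlam : 0 < lam) (hlam1 : lam < 1) (hlam' : 0 < lam') (hlam1' : lam' < 1)
    {g : ℝ≥0} (hg : g < 1) : fScale lam lam' g < 1 := by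
  simpa only [fScale_one hlam1 hlam1'.le] using fScale_strictMono hlam hlam1 hlam' hlam1' hg

end Rescaling

section Tau

variable {K : ℕ}

lemma regEq_natCast_add_of_lt_one {N : ℕ} {h h' : ℝ≥0} (hh : h < 1) (hh' : h' < 1)
    (hzero : h = 0 ↔ h' = 0) : RegEq K (N + h) (N + h') :=
  Or.inl ⟨by rw [natFloor_natCast_add hh, natFloor_natCast_add hh'],
    by rwa [fracPart_natCast_add hh, fracPart_natCast_add hh']⟩

lemma regEq_natCast_add {N : ℕ} {s s' : ℝ≥0} (hs : 0 < s) (hs' : 0 < s') (hs2 : s < 2)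
    (hs2' : s' < 2) (hlt : s < 1 ↔ s' < 1) (heq : s = 1 ↔ s' = 1) :
    RegEq K (N + s) (N + s') := by
  rcases lt_trichotomy s 1 with h1 | h1 | h1
  · exact regEq_natCast_add_of_lt_one h1 (hlt.1 h1) (iff_of_false hs.ne' hs'.ne')
  · rw [h1, heq.1 h1]
    exact RegEq.refl _
  · have h1' : 1 < s' :=
      lt_of_le_of_ne (not_lt.1 (mt hlt.2 h1.not_gt)) (Ne.symm (mt heq.2 h1.ne'))
    rw [← add_tsub_cancel_of_le h1.le, ← add_tsub_cancel_of_le h1'.le, ← add_assoc, ← add_assoc,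
      ← Nat.cast_succ]
    refine regEq_natCast_add_of_lt_one ?_ ?_
      (iff_of_false (tsub_pos_of_lt h1).ne' (tsub_pos_of_lt h1').ne')
    · rwa [tsub_lt_iff_left h1.le, one_add_one_eq_two]
    · rwa [tsub_lt_iff_left h1'.le, one_add_one_eq_two]

lemma RegEq.natFloor_eq_and_fracPart_ne_zero {y y' : ℝ≥0} (h : RegEq K y y')
    (hc : ¬ ((IsNatVal y ∧ IsNatVal y') ∨ ((K : ℝ≥0) < y ∧ (K : ℝ≥0) < y'))) :
    ⌊y⌋₊ = ⌊y'⌋₊ ∧ fracPart y ≠ 0 ∧ fracPart y' ≠ 0 := by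
  simp only [isNatVal_iff_fracPart_eq_zero] at hc
  rcases h with ⟨hfl, hfr⟩ | h
  · exact ⟨hfl, fun h0 => hc (Or.inl ⟨h0, hfr.1 h0⟩),
      fun h0 => hc (Or.inl ⟨hfr.2 h0, h0⟩)⟩
  · exact absurd (Or.inr h) hc

lemma one_sub_fracPart_pos (y : ℝ≥0) : 0 < 1 - fracPart y :=
  tsub_pos_of_lt (fracPart_lt_one y)

lemma one_sub_fracPart_lt_one {y : ℝ≥0} (h : fracPart y ≠ 0) : 1 - fracPart y < 1 :=
  tsub_lt_self one_pos (pos_iff_ne_zero.2 h)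

lemma RegEq.add_tauStep {y y' : ℝ≥0} (h : RegEq K y y') (t : ℝ≥0) :
    RegEq K (y + t) (y' + tauStep K y y' t) := by
  unfold tauStep
  split_ifs with hc
  · rcases hc with ⟨⟨m, rfl⟩, ⟨m', rfl⟩⟩ | ⟨hy, hy'⟩
    · rcases h with ⟨hfl, -⟩ | ⟨hy, hy'⟩
      · rw [Nat.floor_natCast, Nat.floor_natCast] at hfl
        rw [hfl]
        exact RegEq.refl _
      · exact Or.inr ⟨hy.trans_le le_self_add, hy'.trans_le le_self_add⟩
    · exact Or.inr ⟨hy.trans_le le_self_add, hy'.trans_le le_self_add⟩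
  obtain ⟨hfl, hf, hf'⟩ := h.natFloor_eq_and_fracPart_ne_zero hc
  have hmono := fScale_strictMono (one_sub_fracPart_pos y) (one_sub_fracPart_lt_one hf)
    (one_sub_fracPart_pos y') (one_sub_fracPart_lt_one hf')
  have hFg1 := fScale_lt_one (one_sub_fracPart_pos y) (one_sub_fracPart_lt_one hf)
    (one_sub_fracPart_pos y') (one_sub_fracPart_lt_one hf') (fracPart_lt_one t)
  set f := fracPart y
  set f' := fracPart y'
  set g := fracPart t
  set F := fScale (1 - f) (1 - f')
  have hFself : F (1 - f) = 1 - f' := fScale_self (one_sub_fracPart_pos y)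
  have hf1 : f < 1 := fracPart_lt_one y
  have hf1' : f' < 1 := fracPart_lt_one y'
  have hg1 : g < 1 := fracPart_lt_one t
  have hsum : y + t = ((⌊y⌋₊ + ⌊t⌋₊ : ℕ) : ℝ≥0) + (f + g) := by
    conv_lhs => rw [← natFloor_add_fracPart y, ← natFloor_add_fracPart t]
    push_cast; ring
  have hsum' : y' + ((⌊t⌋₊ : ℝ≥0) + F g) = ((⌊y⌋₊ + ⌊t⌋₊ : ℕ) : ℝ≥0) + (f' + F g) := by
    conv_lhs => rw [← natFloor_add_fracPart y']
    rw [← hfl]; push_cast; ring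
  rw [hsum, hsum']
  refine regEq_natCast_add ((pos_iff_ne_zero.2 hf).trans_le le_self_add)
    ((pos_iff_ne_zero.2 hf').trans_le le_self_add)
    (one_add_one_eq_two (R := ℝ≥0) ▸ add_lt_add hf1 hg1)
    (one_add_one_eq_two (R := ℝ≥0) ▸ add_lt_add hf1' hFg1) ?_ ?_
  · rw [← lt_tsub_iff_left, ← lt_tsub_iff_left, ← hFself, hmono.lt_iff_lt]
  · rw [add_comm f, add_comm f', ← eq_tsub_iff_add_eq_of_le hf1.le,
      ← eq_tsub_iff_add_eq_of_le hf1'.le, ← hFself, hmono.injective.eq_iff]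

lemma tauStep_tauStep {y y' : ℝ≥0} (h : RegEq K y y') (t : ℝ≥0) :
    tauStep K y' y (tauStep K y y' t) = t := by
  have hswap : ((IsNatVal y' ∧ IsNatVal y) ∨ ((K : ℝ≥0) < y' ∧ (K : ℝ≥0) < y)) ↔
      ((IsNatVal y ∧ IsNatVal y') ∨ ((K : ℝ≥0) < y ∧ (K : ℝ≥0) < y')) := by
    rw [and_comm, and_comm (a := (K : ℝ≥0) < y')]
  unfold tauStep
  by_cases hc : (IsNatVal y ∧ IsNatVal y') ∨ ((K : ℝ≥0) < y ∧ (K : ℝ≥0) < y')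
  · rw [if_pos hc, if_pos (hswap.2 hc)]
  obtain ⟨-, hf, hf'⟩ := h.natFloor_eq_and_fracPart_ne_zero hc
  have hFg1 := fScale_lt_one (one_sub_fracPart_pos y) (one_sub_fracPart_lt_one hf)
    (one_sub_fracPart_pos y') (one_sub_fracPart_lt_one hf') (fracPart_lt_one t)
  rw [if_neg hc, if_neg (mt hswap.1 hc), natFloor_natCast_add hFg1, fracPart_natCast_add hFg1,
    fScale_fScale (one_sub_fracPart_pos y) (one_sub_fracPart_lt_one hf) (one_sub_fracPart_pos y')
      (one_sub_fracPart_lt_one hf'), natFloor_add_fracPart]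

end Tau

section Clock

variable {K : ℕ}

lemma RegEq.resetStep {a b : ℝ≥0} (h : RegEq K a b) :
    RegEq K (resetStep K a) (resetStep K b) := by
  have hiff : (∃ m : ℕ, m ≤ K ∧ a = m) ↔ ∃ m : ℕ, m ≤ K ∧ b = m :=
    exists_congr fun m => and_congr_right fun hm => h.eq_natCast_iff hm
  unfold IRTA.resetStep
  split_ifs with ha hb hb
  · exact RegEq.refl 0
  · exact absurd (hiff.1 ha) hb
  · exact absurd (hiff.2 hb) ha
  · exact h

lemma resetStep_zero : resetStep K 0 = 0 := if_pos ⟨0, Nat.zero_le K, Nat.cast_zero.symm⟩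

lemma resetStep_resetStep (v : ℝ≥0) : resetStep K (resetStep K v) = resetStep K v := by
  by_cases h : ∃ m : ℕ, m ≤ K ∧ v = m
  · rw [show resetStep K v = 0 from if_pos h, resetStep_zero]
  · have hv : resetStep K v = v := if_neg h
    rw [hv, hv]

lemma resetStep_cKAux {v : ℝ≥0} (hv : resetStep K v = v) (d : Timestamp) :
    resetStep K (cKAux K v d) = cKAux K v d := by
  induction d generalizing v with
  | nil => exact hv
  | cons t d ih => exact ih (resetStep_resetStep _)

lemma resetStep_cKW {A : Type} (w : TimedWord A) : resetStep K (cKW K w) = cKW K w :=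
  resetStep_cKAux resetStep_zero _

lemma tauW_cKW {A : Type} (u v w : TimedWord A) :
    tauW K (cKW K u) (cKW K v) w = tauWAux K (cKW K u) (cKW K v) w := by
  rw [tauW, resetStep_cKW, resetStep_cKW]

lemma tauWAux_tauWAux {A : Type} {y y' : ℝ≥0} (h : RegEq K y y') (w : TimedWord A) :
    tauWAux K y' y (tauWAux K y y' w) = w := by
  induction w generalizing y y' with
  | nil => rfl
  | cons x w ih =>
    obtain ⟨t, a⟩ := x
    rw [tauWAux, tauWAux, tauStep_tauStep h t, ih (h.add_tauStep t).resetStep]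

end Clock

section Runs

variable {K : ℕ} {A : Type} {M : TA A}

lemma StrictGuard.sat_iff {φ : CC} (hφ : StrictGuard K φ) (hmax : φ.maxConst ≤ K) {a b : ℝ≥0}
    (h : RegEq K a b) : φ.sat a ↔ φ.sat b := by
  rcases hφ with ⟨m, rfl⟩ | ⟨m, rfl⟩ | rfl
  · exact h.eq_natCast_iff hmax
  · have hm : m + 1 ≤ K := (le_max_right _ _).trans hmax
    exact and_congr (h.natCast_lt_iff (Nat.le_of_succ_le hm)) (h.lt_natCast_iff hm)
  · exact h.natCast_lt_iff le_rfl

lemma resetStep_eq_of_sat (hs : M.IsStrict K) (hmax : M.MaxConstLE K) {θ : TTrans M.Q A}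
    (hθ : θ ∈ M.trans) {x : ℝ≥0} (hg : θ.guard.sat x) :
    resetStep K x = if θ.reset then 0 else x := by
  obtain ⟨hφ, hreset⟩ := hs θ hθ
  have hmaxθ := hmax θ hθ
  by_cases hr : θ.reset = true
  · obtain ⟨m, hm⟩ := hreset.2 hr
    rw [hm] at hg hmaxθ
    exact (if_pos ⟨m, hmaxθ, hg⟩).trans (if_pos hr).symm
  · rw [if_neg hr]
    refine if_neg ?_
    rintro ⟨m, hmK, rfl⟩
    rcases hφ with hφ | ⟨n, hn⟩ | hn
    · exact hr (hreset.1 hφ)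
    · rw [hn] at hg
      obtain ⟨h1, h2⟩ : (n : ℝ≥0) < m ∧ (m : ℝ≥0) < (n + 1 : ℕ) := hg
      norm_cast at h1 h2
      omega
    · rw [hn] at hg
      exact (not_lt.2 (Nat.cast_le.2 hmK)) hg

lemma Steps.append {c₁ c₂ c₃ : M.Q × ℝ≥0} {w₁ w₂ : TimedWord A} (h₁ : Steps M c₁ w₁ c₂)
    (h₂ : Steps M c₂ w₂ c₃) : Steps M c₁ (w₁ ++ w₂) c₃ := by
  induction h₁ with
  | nil => exact h₂
  | cons θ hθ hsrc hlab hg _ ih => exact .cons θ hθ hsrc hlab hg (ih h₂)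

lemma Steps.exists_of_append {w₁ w₂ : TimedWord A} {c₁ c₃ : M.Q × ℝ≥0}
    (h : Steps M c₁ (w₁ ++ w₂) c₃) : ∃ c₂, Steps M c₁ w₁ c₂ ∧ Steps M c₂ w₂ c₃ := by
  induction w₁ generalizing c₁ with
  | nil => exact ⟨c₁, .nil c₁, h⟩
  | cons x w₁ ih =>
    cases h with
    | cons θ hθ hsrc hlab hg hrest =>
      obtain ⟨c₂, h₁, h₂⟩ := ih hrest
      exact ⟨c₂, .cons θ hθ hsrc hlab hg h₁, h₂⟩

lemma Steps.eq_of_deterministic (hdet : M.Deterministic) {w : TimedWord A}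
    {c d₁ d₂ : M.Q × ℝ≥0} (h₁ : Steps M c w d₁) (h₂ : Steps M c w d₂) : d₁ = d₂ := by
  induction h₁ with
  | nil => cases h₂; rfl
  | cons θ₁ hθ₁ hsrc₁ hlab₁ hg₁ _ ih =>
    cases h₂ with
    | cons θ₂ hθ₂ hsrc₂ hlab₂ hg₂ hrest₂ =>
      obtain rfl : θ₁ = θ₂ := by
        by_contra hne
        exact hdet θ₁ hθ₁ θ₂ hθ₂ hne (hsrc₁.trans hsrc₂.symm) (hlab₁.trans hlab₂.symm) _
          ⟨hg₁, hg₂⟩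
      exact ih hrest₂

lemma Steps.snd_eq_cKAux (hs : M.IsStrict K) (hmax : M.MaxConstLE K) {w : TimedWord A}
    {c c' : M.Q × ℝ≥0} (h : Steps M c w c') : c'.2 = cKAux K c.2 (w.map Prod.fst) := by
  induction h with
  | nil => rfl
  | cons θ hθ _ _ hg _ ih =>
    rwa [List.map_cons, cKAux, resetStep_eq_of_sat hs hmax hθ hg]

lemma Steps.tauWAux (hs : M.IsStrict K) (hmax : M.MaxConstLE K) {w : TimedWord A} {q p : M.Q}
    {y y' ν : ℝ≥0} (hy : RegEq K y y') (h : Steps M (q, y) w (p, ν)) :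
    ∃ ν', Steps M (q, y') (tauWAux K y y' w) (p, ν') := by
  induction w generalizing q y y' with
  | nil => cases h; exact ⟨y', .nil _⟩
  | cons x w ih =>
    obtain ⟨t, a⟩ := x
    cases h with
    | cons θ hθ hsrc hlab hg hrest =>
      have hreg := hy.add_tauStep t
      have hg' := ((hs θ hθ).1.sat_iff (hmax θ hθ) hreg).1 hg
      rw [← resetStep_eq_of_sat hs hmax hθ hg] at hrest
      obtain ⟨ν', hrest'⟩ := ih hreg.resetStep hrest
      exact ⟨ν', .cons θ hθ hsrc hlab hg' (resetStep_eq_of_sat hs hmax hθ hg' ▸ hrest')⟩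

end Runs

section Languages

variable {K : ℕ} {A : Type} {M : TA A}

lemma residual_lang_eq_langFrom (hdet : M.Deterministic) {u : TimedWord A} {c : M.Q × ℝ≥0}
    (hu : Steps M (M.init, 0) u c) : residual M.Lang u = M.LangFrom c := by
  ext w
  constructor
  · rintro ⟨p, ν, huw, hp⟩
    obtain ⟨c', hu', hw⟩ := huw.exists_of_append
    exact ⟨p, ν, hu'.eq_of_deterministic hdet hu ▸ hw, hp⟩
  · rintro ⟨p, ν, hw, hp⟩
    exact ⟨p, ν, hu.append hw, hp⟩

lemma tauWAux_image_langFrom (hs : M.IsStrict K) (hmax : M.MaxConstLE K) (q : M.Q)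
    {y y' : ℝ≥0} (hy : RegEq K y y') :
    tauWAux K y y' '' M.LangFrom (q, y) = M.LangFrom (q, y') := by
  ext w
  constructor
  · rintro ⟨w, ⟨p, ν, hw, hp⟩, rfl⟩
    obtain ⟨ν', hw'⟩ := hw.tauWAux hs hmax hy
    exact ⟨p, ν', hw', hp⟩
  · rintro ⟨p, ν, hw, hp⟩
    obtain ⟨ν', hw'⟩ := hw.tauWAux hs hmax hy.symm
    exact ⟨_, ⟨p, ν', hw', hp⟩, tauWAux_tauWAux hy.symm w⟩

end Languages

theorem statement11_general {A : Type} (K : ℕ) (B : TA A) (hB : IsKAcceptor B K) :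
    ∀ u v : TimedWord A, B.SameState u v → ApproxLK B.Lang K u v := by
  obtain ⟨-, -, hdet, -, hs, hmax, hregion⟩ := hB
  rintro u v ⟨q, ν, ν', hu, hv⟩
  have hreg : RegEq K (cKW K u) (cKW K v) := hregion u v ⟨q, ν, ν', hu, hv⟩
  have hν : ν = cKW K u := hu.snd_eq_cKAux hs hmax
  have hν' : ν' = cKW K v := hv.snd_eq_cKAux hs hmax
  refine ⟨hreg, ?_⟩
  simp only [funext (tauW_cKW u v), residual_lang_eq_langFrom hdet hu,
    residual_lang_eq_langFrom hdet hv, hν, hν']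
  exact tauWAux_image_langFrom hs hmax q hreg

/-- the state equivalence of a `K`-acceptor refines `≈^{L,K}`. -/
theorem statement11 {A : Type} [Finite A] (K : ℕ) (B : TA A) (hB : IsKAcceptor B K) :
    ∀ u v : TimedWord A, B.SameState u v → ApproxLK B.Lang K u v :=
  statement11_general K B hB

end IRTA
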